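/- arXiv:2204.03052 — 2 statements merged into one kernel-verified Lean document; each statement's English description precedes it below -/
import Mathlib

section
/- The map f(x) = 2x/(1+|x|²) is an isometry from the Finsler–Poincaré disk (D, F_P) to the Funk model (D, F_F): for all x ∈ D and v ∈ ℝ², F_P(x,v) = F_F(f(x), Df_x(v)). -/
noncomputable section

/-- The Euclidean plane. -/
abbrev E2 := EuclideanSpace ℝ (Fin 2)

/-- The open unit disk. -/
def Dset : Set E2 := {x | ‖x‖ < 1}

/-- The upper half plane. -/
def Hset : Set E2 := {x | x 1 > 0}

/-- f(x) = 2x/(1+|x|²). -/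
def fPF (x : E2) : E2 := (2 / (1 + ‖x‖ ^ 2)) • x

/-- The Funk metric on the disk. -/
def FF (x v : E2) : ℝ :=
  (Real.sqrt ((1 - ‖x‖ ^ 2) * ‖v‖ ^ 2 + (inner ℝ x v : ℝ) ^ 2) + (inner ℝ x v : ℝ)) / (1 - ‖x‖ ^ 2)

/-- The Finsler-Poincaré metric on the disk. -/
def FP (x v : E2) : ℝ := 2 * ‖v‖ / (1 - ‖x‖ ^ 2) + 4 * (inner ℝ x v : ℝ) / (1 - ‖x‖ ^ 4)

/-! With `s = 1 + |x|²`, `t = 1 - |x|²` and `w = Df_x v = (2/s) v - (4⟨x,v⟩/s²) x`, one computes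
`1 - |f x|² = t²/s²` and `⟨f x, w⟩ = 4t⟨x,v⟩/s³`. In the Funk radicand
`(1 - |f x|²)|w|² + ⟨f x, w⟩²` all the `⟨x,v⟩²` terms cancel, leaving the perfect square
`(2t|v|/s²)²`; so `F_F(f x, w) = (2t|v|/s² + 4t⟨x,v⟩/s³) / (t²/s²)`, which is `F_P(x,v)`
once `1 - |x|⁴ = t s` is used. -/

open RealInnerProductSpace

theorem fderiv_two_div_one_add_norm_sq_smul_apply {E : Type*} [NormedAddCommGroup E]
    [InnerProductSpace ℝ E] (x v : E) :
    fderiv ℝ (fun y : E => (2 / (1 + ‖y‖ ^ 2)) • y) x v =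
      (2 / (1 + ‖x‖ ^ 2)) • v - (4 * ⟪x, v⟫ / (1 + ‖x‖ ^ 2) ^ 2) • x := by
  have hs : 1 + ‖x‖ ^ 2 ≠ 0 := by positivity
  have hg : HasDerivAt (fun t : ℝ => 2 / (1 + t)) (-2 / (1 + ‖x‖ ^ 2) ^ 2) (‖x‖ ^ 2) :=
    ((hasDerivAt_const (‖x‖ ^ 2) (2 : ℝ)).fun_div
      ((hasDerivAt_id' (‖x‖ ^ 2)).const_add 1) hs).congr_deriv (by ring)
  have hf := (hg.comp_hasFDerivAt x (hasStrictFDerivAt_norm_sq x).hasFDerivAt).smul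
    (hasFDerivAt_id x)
  rw [HasFDerivAt.fderiv (f := fun y : E => (2 / (1 + ‖y‖ ^ 2)) • y) hf]
  simp only [Function.comp_apply, id_eq, add_apply, smul_apply, ContinuousLinearMap.id_apply,
    ContinuousLinearMap.smulRight_apply, innerSL_apply_apply]
  match_scalars <;> ring

theorem fderiv_fPF_apply (x v : E2) :
    fderiv ℝ fPF x v = (2 / (1 + ‖x‖ ^ 2)) • v - (4 * ⟪x, v⟫ / (1 + ‖x‖ ^ 2) ^ 2) • x :=
  fderiv_two_div_one_add_norm_sq_smul_apply x v

theorem one_sub_norm_fPF_sq (x : E2) :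
    1 - ‖fPF x‖ ^ 2 = ((1 - ‖x‖ ^ 2) / (1 + ‖x‖ ^ 2)) ^ 2 := by
  rw [fPF, norm_smul, mul_pow, Real.norm_eq_abs, sq_abs]
  field_simp
  ring

theorem inner_fPF_fderiv_fPF (x v : E2) :
    ⟪fPF x, fderiv ℝ fPF x v⟫ = 4 * (1 - ‖x‖ ^ 2) * ⟪x, v⟫ / (1 + ‖x‖ ^ 2) ^ 3 := by
  rw [fPF, fderiv_fPF_apply]
  simp only [inner_smul_left, inner_sub_right, inner_smul_right, RCLike.conj_to_real,
    real_inner_self_eq_norm_sq]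
  field_simp
  ring

theorem norm_fderiv_fPF_sq (x v : E2) :
    ‖fderiv ℝ fPF x v‖ ^ 2 =
      4 * ‖v‖ ^ 2 / (1 + ‖x‖ ^ 2) ^ 2 - 16 * ⟪x, v⟫ ^ 2 / (1 + ‖x‖ ^ 2) ^ 4 := by
  rw [← real_inner_self_eq_norm_sq, fderiv_fPF_apply]
  simp only [inner_sub_left, inner_sub_right, inner_smul_left, inner_smul_right,
    RCLike.conj_to_real, real_inner_self_eq_norm_sq, real_inner_comm v x]
  field_simp
  ring

theorem funk_radicand_fPF (x v : E2) :
    (1 - ‖fPF x‖ ^ 2) * ‖fderiv ℝ fPF x v‖ ^ 2 + ⟪fPF x, fderiv ℝ fPF x v⟫ ^ 2 =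
      (2 * (1 - ‖x‖ ^ 2) * ‖v‖ / (1 + ‖x‖ ^ 2) ^ 2) ^ 2 := by
  rw [one_sub_norm_fPF_sq, norm_fderiv_fPF_sq, inner_fPF_fderiv_fPF]
  field_simp
  ring

theorem fPF_isometry (x : E2) (hx : x ∈ Dset) (v : E2) :
    FP x v = FF (fPF x) (fderiv ℝ fPF x v) := by
  have ht : 0 < 1 - ‖x‖ ^ 2 := sub_pos.2 (pow_lt_one₀ (norm_nonneg x) hx two_ne_zero)
  rw [FF, funk_radicand_fPF, Real.sqrt_sq (by positivity), inner_fPF_fderiv_fPF,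
    one_sub_norm_fPF_sq, FP, show (1 : ℝ) - ‖x‖ ^ 4 = (1 - ‖x‖ ^ 2) * (1 + ‖x‖ ^ 2) by ring]
  field_simp
end
end

section
/- The pullback of the Klein term under f equals the hyperbolic Poincaré term: for x ∈ D, v ∈ ℝ², with f(x) = 2x/(1+|x|²), one has √((1-|f(x)|²)|Df_x(v)|² + ⟨f(x),Df_x(v)⟩²)/(1-|f(x)|²) = 2|v|/(1-|x|²). -/
noncomputable section

/-!
Write `s = ‖x‖²` and `f x = a • x` with `a = 2 / (1 + s)`. Then
`Df_x v = a • v - (4 ⟪x, v⟫ / (1 + s)²) • x` and `1 - ‖f x‖² = ((1 - s) / (1 + s))²`.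
In the Klein quadratic form the terms in `⟪x, v⟫²` coming from `‖Df_x v‖²` and from
`⟪f x, Df_x v⟫²` cancel, leaving the perfect square `(2 ‖v‖ (1 - s) / (1 + s)²)²`;
taking the square root (legitimate since `s < 1`) and dividing gives the Poincaré term.
-/

open scoped RealInnerProductSpace

variable {F : Type*} [NormedAddCommGroup F] [InnerProductSpace ℝ F]

def poincareToKlein (x : F) : F := (2 / (1 + ‖x‖ ^ 2)) • x

theorem hasFDerivAt_poincareToKlein (x : F) :
    HasFDerivAt poincareToKlein
      ((2 / (1 + ‖x‖ ^ 2)) • ContinuousLinearMap.id ℝ F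
        + ((-2 / (1 + ‖x‖ ^ 2) ^ 2) • (2 • innerSL ℝ x)).smulRight x) x := by
  have hpos : 0 < 1 + ‖x‖ ^ 2 := by positivity
  have hden : HasFDerivAt (fun y : F => 1 + ‖y‖ ^ 2) (2 • innerSL ℝ x) x := by
    simpa using (hasFDerivAt_id x).norm_sq.const_add 1
  have hrecip : HasDerivAt (fun u : ℝ => 2 / u) (-2 / (1 + ‖x‖ ^ 2) ^ 2) (1 + ‖x‖ ^ 2) := by
    simpa [div_eq_mul_inv, neg_div] using (hasDerivAt_inv hpos.ne').const_mul (2 : ℝ)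
  exact (hrecip.comp_hasFDerivAt x hden).smul (hasFDerivAt_id x)

theorem fderiv_poincareToKlein_apply (x v : F) :
    fderiv ℝ poincareToKlein x v
      = (2 / (1 + ‖x‖ ^ 2)) • v - (4 * ⟪x, v⟫ / (1 + ‖x‖ ^ 2) ^ 2) • x := by
  rw [(hasFDerivAt_poincareToKlein x).fderiv]
  simp only [add_apply, smul_apply, ContinuousLinearMap.id_apply,
    ContinuousLinearMap.smulRight_apply, coe_innerSL_apply, nsmul_eq_mul, Nat.cast_ofNat,
    smul_eq_mul, sub_eq_add_neg, ← neg_smul]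
  ring_nf

theorem norm_sq_poincareToKlein (x : F) :
    ‖poincareToKlein x‖ ^ 2 = 4 * ‖x‖ ^ 2 / (1 + ‖x‖ ^ 2) ^ 2 := by
  rw [poincareToKlein, norm_smul, mul_pow, Real.norm_of_nonneg (by positivity)]
  field_simp
  ring

theorem one_sub_norm_sq_poincareToKlein (x : F) :
    1 - ‖poincareToKlein x‖ ^ 2 = ((1 - ‖x‖ ^ 2) / (1 + ‖x‖ ^ 2)) ^ 2 := by
  rw [norm_sq_poincareToKlein]
  field_simp
  ring

theorem norm_sq_fderiv_poincareToKlein_apply (x v : F) :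
    ‖fderiv ℝ poincareToKlein x v‖ ^ 2
      = 4 * ‖v‖ ^ 2 / (1 + ‖x‖ ^ 2) ^ 2 - 16 * ⟪x, v⟫ ^ 2 / (1 + ‖x‖ ^ 2) ^ 4 := by
  rw [fderiv_poincareToKlein_apply, norm_sub_sq_real]
  simp only [norm_smul, mul_pow, Real.norm_eq_abs, sq_abs, real_inner_smul_left,
    real_inner_smul_right, real_inner_comm v x]
  field_simp
  ring

theorem inner_poincareToKlein_fderiv_apply (x v : F) :
    ⟪poincareToKlein x, fderiv ℝ poincareToKlein x v⟫
      = 4 * ⟪x, v⟫ * (1 - ‖x‖ ^ 2) / (1 + ‖x‖ ^ 2) ^ 3 := by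
  rw [fderiv_poincareToKlein_apply, poincareToKlein]
  simp only [inner_sub_right, real_inner_smul_left, real_inner_smul_right,
    real_inner_self_eq_norm_sq]
  field_simp
  ring

theorem kleinForm_poincareToKlein (x v : F) :
    (1 - ‖poincareToKlein x‖ ^ 2) * ‖fderiv ℝ poincareToKlein x v‖ ^ 2
        + ⟪poincareToKlein x, fderiv ℝ poincareToKlein x v⟫ ^ 2
      = (2 * ‖v‖ * (1 - ‖x‖ ^ 2) / (1 + ‖x‖ ^ 2) ^ 2) ^ 2 := by
  rw [one_sub_norm_sq_poincareToKlein, norm_sq_fderiv_poincareToKlein_apply,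
    inner_poincareToKlein_fderiv_apply]
  field_simp
  ring

theorem pullback_klein_term (x : E2) (hx : x ∈ Dset) (v : E2) :
    Real.sqrt ((1 - ‖fPF x‖ ^ 2) * ‖fderiv ℝ fPF x v‖ ^ 2
        + (inner ℝ (fPF x) (fderiv ℝ fPF x v) : ℝ) ^ 2) / (1 - ‖fPF x‖ ^ 2)
      = 2 * ‖v‖ / (1 - ‖x‖ ^ 2) := by
  have hfPF : fPF = poincareToKlein := rfl
  have hs : 0 < 1 - ‖x‖ ^ 2 := sub_pos.2 (pow_lt_one₀ (norm_nonneg x) hx two_ne_zero)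
  rw [hfPF, kleinForm_poincareToKlein, Real.sqrt_sq (by positivity),
    one_sub_norm_sq_poincareToKlein]
  field_simp
end
end
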